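/- arXiv:2009.10480 — 4 statements merged into one kernel-verified Lean document; each statement's English description precedes it below -/
import Mathlib

section
/- Among all sums of N distinct L-th roots of unity (with N odd, 1 ≤ N ≤ L), the maximal absolute value is achieved by (and only by, up to rotation) sums of N consecutive roots of unity, and this maximal absolute value equals sin(πN/L)/sin(π/L). -/
/-!
Write `ψ k = exp (2πik/L)` and `N = 2M + 1`. Rotating `z = ∑_{k ∈ S} ψ k` onto the positive real
axis and then back by the root `ψ c` nearest to its argument gives
`‖z‖ = ∑_{k ∈ S} cos (2π t_k / L - φ)`, where `t_k ∈ (-L/2, L/2]` represents `k - c` and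
`|φ| ≤ π/L`. A summand is at least `cos (πN/L)` when `|t_k| ≤ M` and at most that value otherwise,
so exchanging elements shows that the window `B = {c - M, …, c + M}` maximises the sum, which over
`B` equals `(sin (πN/L) / sin (π/L)) cos φ` by the Dirichlet kernel identity. Equality forces
`φ = 0`; then the summands over `B` are strictly above the threshold, so `S = B`.
-/

open Finset Real

namespace Finset

variable {α β : Type*} [DecidableEq α] [AddCommGroup β] [LinearOrder β] [IsOrderedAddMonoid β]
  {S B : Finset α} {f : α → β} {c : β}

theorem sum_le_sum_of_card_eq_of_le_of_le (hcard : S.card = B.card)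
    (hB : ∀ k ∈ B, c ≤ f k) (hout : ∀ k ∉ B, f k ≤ c) : ∑ k ∈ S, f k ≤ ∑ k ∈ B, f k := by
  rw [← sum_inter_add_sum_sdiff S B, ← sum_inter_add_sum_sdiff B S, inter_comm B S]
  gcongr 1
  calc ∑ k ∈ S \ B, f k ≤ #(S \ B) • c :=
        sum_le_card_nsmul _ _ _ fun k hk => hout k (mem_sdiff.1 hk).2
    _ = #(B \ S) • c := by rw [card_sdiff_comm hcard]
    _ ≤ ∑ k ∈ B \ S, f k := card_nsmul_le_sum _ _ _ fun k hk => hB k (mem_sdiff.1 hk).1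

theorem sum_lt_sum_of_card_eq_of_lt_of_le (hcard : S.card = B.card) (hne : S ≠ B)
    (hB : ∀ k ∈ B, c < f k) (hout : ∀ k ∉ B, f k ≤ c) : ∑ k ∈ S, f k < ∑ k ∈ B, f k := by
  have hBS : (B \ S).Nonempty := by
    rw [nonempty_iff_ne_empty, Ne, sdiff_eq_empty_iff_subset]
    exact fun h => hne (eq_of_subset_of_card_le h hcard.le).symm
  rw [← sum_inter_add_sum_sdiff S B, ← sum_inter_add_sum_sdiff B S, inter_comm B S]
  gcongr 1
  calc ∑ k ∈ S \ B, f k ≤ #(S \ B) • c :=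
        sum_le_card_nsmul _ _ _ fun k hk => hout k (mem_sdiff.1 hk).2
    _ = ∑ k ∈ B \ S, c := by rw [card_sdiff_comm hcard, sum_const]
    _ < ∑ k ∈ B \ S, f k := sum_lt_sum_of_nonempty hBS fun k hk => hB k (mem_sdiff.1 hk).1

end Finset

namespace Real

theorem cos_le_cos_of_le_abs {c y : ℝ} (hc : 0 ≤ c) (hcy : c ≤ |y|) (hy : |y| ≤ 2 * π - c) :
    cos y ≤ cos c := by
  rw [← cos_abs y]
  rcases le_total |y| π with h | h
  · exact cos_le_cos_of_nonneg_of_le_pi hc h hcy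
  · rw [← cos_two_pi_sub]
    exact cos_le_cos_of_nonneg_of_le_pi hc (by linarith) (by linarith)

variable {x φ : ℝ} {M : ℕ} {t : ℤ}

theorem cos_le_cos_two_mul_sub (hφ : |φ| ≤ x) (hMx : (2 * M + 1) * x ≤ π) (ht : |t| ≤ M) :
    cos ((2 * M + 1) * x) ≤ cos (2 * x * t - φ) := by
  have htM : |(t : ℝ)| ≤ M := by exact_mod_cast ht
  have hx : 0 ≤ x := (abs_nonneg φ).trans hφ
  rw [← cos_abs (2 * x * t - φ)]
  refine cos_le_cos_of_nonneg_of_le_pi (abs_nonneg _) hMx ?_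
  calc |2 * x * t - φ| ≤ 2 * x * |(t : ℝ)| + |φ| := by
        simpa [abs_mul, abs_of_nonneg hx] using abs_sub (2 * x * t) φ
    _ ≤ (2 * M + 1) * x := by nlinarith

theorem cos_two_mul_sub_le_cos (hφ : |φ| ≤ x) (ht : M + 1 ≤ |t|) (htx : 2 * x * |(t : ℝ)| ≤ π) :
    cos (2 * x * t - φ) ≤ cos ((2 * M + 1) * x) := by
  have htM : (M : ℝ) + 1 ≤ |(t : ℝ)| := by exact_mod_cast ht
  have hx : 0 ≤ x := (abs_nonneg φ).trans hφ
  have habs : |2 * x * (t : ℝ)| = 2 * x * |(t : ℝ)| := by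
    rw [abs_mul, abs_of_nonneg (by linarith : (0:ℝ) ≤ 2 * x)]
  apply cos_le_cos_of_le_abs (by positivity)
  · have := abs_sub_abs_le_abs_sub (2 * x * t) φ
    nlinarith
  · have := abs_sub (2 * x * t) φ
    nlinarith

theorem cos_lt_cos_two_mul (hx : 0 < x) (hMx : (2 * M + 1) * x ≤ π) (ht : |t| ≤ M) :
    cos ((2 * M + 1) * x) < cos (2 * x * t) := by
  have htM : |(t : ℝ)| ≤ M := by exact_mod_cast ht
  rw [← cos_abs (2 * x * t), abs_mul, abs_of_pos (by linarith : (0:ℝ) < 2 * x)]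
  exact cos_lt_cos_of_nonneg_of_le_pi (by positivity) hMx (by nlinarith)

theorem two_mul_add_one_mul_pi_div_le {M L : ℕ} (hM : 2 * M + 1 ≤ L) :
    (2 * M + 1) * (π / L) ≤ π := by
  rw [mul_div_assoc', div_le_iff₀ (by exact_mod_cast (by omega : 0 < L)), mul_comm]
  gcongr
  exact_mod_cast hM

theorem sin_pi_div_natCast_pos {L : ℕ} (hL : 2 ≤ L) : 0 < sin (π / L) := by
  have : (2 : ℝ) ≤ L := by exact_mod_cast hL
  apply sin_pos_of_pos_of_lt_pi (by positivity)
  rw [div_lt_iff₀ (by positivity)]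
  nlinarith [pi_pos]

theorem sin_pi_mul_div_natCast_nonneg {N L : ℕ} (h : N ≤ L) : 0 ≤ sin (π * N / L) := by
  refine sin_nonneg_of_nonneg_of_le_pi (by positivity) ?_
  rw [mul_div_assoc]
  exact mul_le_of_le_one_right pi_pos.le (div_le_one_of_le₀ (by exact_mod_cast h) (by positivity))

theorem sin_pi_mul_div_natCast_pos {N L : ℕ} (h₀ : 0 < N) (h : N < L) : 0 < sin (π * N / L) := by
  have hL : (0 : ℝ) < L := by exact_mod_cast h₀.trans h
  refine sin_pos_of_pos_of_lt_pi (by positivity) ?_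
  rw [mul_div_assoc]
  exact mul_lt_of_lt_one_right pi_pos ((div_lt_one hL).2 (by exact_mod_cast h))

end Real

-- Dirichlet kernel: after multiplying by `sin x`, the sum telescopes.
theorem Complex.sum_range_exp_mul_I_mul_sin (n : ℕ) (x : ℂ) :
    (∑ j ∈ range n, exp ((2 * j - (n - 1)) * x * I)) * sin x = sin (n * x) := by
  set f : ℕ → ℂ := fun j => exp ((2 * j - n) * x * I)
  have step : ∀ j : ℕ, exp ((2 * j - (n - 1)) * x * I) * (exp (-x * I) - exp (x * I))
      = f j - f (j + 1) := by
    intro j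
    simp only [f, mul_sub, ← exp_add]
    push_cast
    ring_nf
  calc (∑ j ∈ range n, exp ((2 * j - (n - 1)) * x * I)) * sin x
      = (∑ j ∈ range n, (f j - f (j + 1))) * I / 2 := by
        rw [sin, ← sum_congr rfl fun j _ => step j, ← sum_mul]
        ring
    _ = sin (n * x) := by
        rw [sum_range_sub', sin]
        simp only [f]
        push_cast
        ring_nf

namespace ZMod

variable {L : ℕ}

def consecutive (a : ZMod L) (n : ℕ) : Finset (ZMod L) :=
  univ.image fun j : Fin n => a + (j : ZMod L)

theorem natCast_injOn_Iio {n : ℕ} (hn : n ≤ L) :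
    Set.InjOn (fun j : ℕ => (j : ZMod L)) (Set.Iio n) := by
  intro i hi j hj h
  have := congrArg ZMod.val h
  simp only at this
  rwa [val_cast_of_lt (lt_of_lt_of_le hi hn), val_cast_of_lt (lt_of_lt_of_le hj hn)] at this

theorem card_consecutive {n : ℕ} (hn : n ≤ L) (a : ZMod L) : (consecutive a n).card = n := by
  rw [consecutive, card_image_of_injective, card_univ, Fintype.card_fin]
  intro i j h
  exact Fin.ext (natCast_injOn_Iio hn i.isLt j.isLt (add_left_cancel h))

theorem sum_consecutive {β : Type*} [AddCommMonoid β] {n : ℕ} (hn : n ≤ L) (a : ZMod L)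
    (f : ZMod L → β) : ∑ k ∈ consecutive a n, f k = ∑ j ∈ range n, f (a + j) := by
  rw [consecutive, sum_image, Fin.sum_univ_eq_sum_range (fun j => f (a + j))]
  intro i _ j _ h
  exact Fin.ext (natCast_injOn_Iio hn i.isLt j.isLt (add_left_cancel h))

variable [NeZero L]

theorem card_finset_le (S : Finset (ZMod L)) : S.card ≤ L :=
  S.card_le_univ.trans_eq (ZMod.card L)

theorem mem_consecutive_sub_iff {M : ℕ} (hM : 2 * M + 1 ≤ L) (c k : ZMod L) :
    k ∈ consecutive (c - (M : ZMod L)) (2 * M + 1) ↔ |(k - c).valMinAbs| ≤ M := by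
  constructor
  · intro hk
    obtain ⟨j, -, rfl⟩ := mem_image.1 hk
    have hj := j.isLt
    have : (c - M + (j : ℕ) - c : ZMod L) = (((j : ℕ) - M : ℤ) : ZMod L) := by push_cast; ring
    rw [this, (valMinAbs_spec _ _).2 ⟨rfl, by constructor <;> omega⟩, abs_le]
    omega
  · intro hk
    set t := (k - c).valMinAbs
    obtain ⟨ht₁, ht₂⟩ := abs_le.1 hk
    refine mem_image.2 ⟨⟨(t + M).toNat, by omega⟩, mem_univ _, ?_⟩
    have : (((t + M).toNat : ℕ) : ZMod L) = ((t + M : ℤ) : ZMod L) := by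
      rw [← Int.cast_natCast, Int.toNat_of_nonneg (by omega)]
    simp only [this, Int.cast_add, coe_valMinAbs, t]
    push_cast
    ring

local notation "ψ" => (stdAddChar : AddChar (ZMod L) ℂ)

theorem re_exp_mul_stdAddChar (φ : ℝ) (k : ZMod L) :
    (Complex.exp (-φ * Complex.I) * ψ k).re = cos (2 * (π / L) * k.valMinAbs - φ) := by
  rw [← coe_valMinAbs k, stdAddChar_coe, ← Complex.exp_add, coe_valMinAbs]
  convert Complex.exp_ofReal_mul_I_re (2 * (π / L) * k.valMinAbs - φ) using 3
  push_cast
  ring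

theorem sum_consecutive_stdAddChar_sub (hL : 2 ≤ L) {M : ℕ} (hM : 2 * M + 1 ≤ L) (c : ZMod L) :
    ∑ k ∈ consecutive (c - (M : ZMod L)) (2 * M + 1), ψ (k - c)
      = ((sin (π * ↑(2 * M + 1) / L) / sin (π / L) : ℝ) : ℂ) := by
  have hsin : Complex.sin (π / L : ℝ) ≠ 0 := by exact_mod_cast (sin_pi_div_natCast_pos hL).ne'
  have hterm : ∀ j : ℕ, ψ (c - M + j - c)
      = Complex.exp ((2 * j - (↑(2 * M + 1) - 1)) * (π / L : ℝ) * Complex.I) := by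
    intro j
    rw [show c - M + j - c = (((j : ℤ) - M : ℤ) : ZMod L) by push_cast; ring, stdAddChar_coe]
    congr 1
    push_cast
    ring
  rw [sum_consecutive hM, sum_congr rfl fun j _ => hterm j,
    ← mul_div_cancel_right₀ (∑ j ∈ range (2 * M + 1), _) hsin, Complex.sum_range_exp_mul_I_mul_sin]
  push_cast
  ring_nf

theorem norm_sum_consecutive_stdAddChar (hL : 2 ≤ L) {M : ℕ} (hM : 2 * M + 1 ≤ L) (a : ZMod L) :
    ‖∑ k ∈ consecutive a (2 * M + 1), ψ k‖ = sin (π * ↑(2 * M + 1) / L) / sin (π / L) := by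
  set c := a + M
  have hsum : ∑ k ∈ consecutive a (2 * M + 1), ψ k
      = ψ c * ∑ k ∈ consecutive (c - (M : ZMod L)) (2 * M + 1), ψ (k - c) := by
    rw [mul_sum, add_sub_cancel_right]
    exact sum_congr rfl fun k _ => by rw [← AddChar.map_add_eq_mul, add_sub_cancel]
  rw [hsum, sum_consecutive_stdAddChar_sub hL hM, norm_mul, stdAddChar_apply, Circle.norm_coe,
    one_mul, Complex.norm_real, norm_of_nonneg]
  exact div_nonneg (sin_pi_mul_div_natCast_nonneg hM) (sin_pi_div_natCast_pos hL).le

theorem exists_norm_sum_stdAddChar_eq_sum_re (S : Finset (ZMod L)) :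
    ∃ (c : ZMod L) (φ : ℝ), |φ| ≤ π / L ∧
      ‖∑ k ∈ S, ψ k‖ = ∑ k ∈ S, (Complex.exp (-φ * Complex.I) * ψ (k - c)).re := by
  set z := ∑ k ∈ S, ψ k
  set m := round (z.arg * L / (2 * π))
  have hL : (0 : ℝ) < L := by exact_mod_cast (NeZero.pos L)
  refine ⟨m, z.arg - 2 * π * m / L, ?_, ?_⟩
  · have := abs_sub_round (z.arg * L / (2 * π))
    rw [show z.arg - 2 * π * m / L = (z.arg * L / (2 * π) - m) * (2 * π / L) by field_simp,
      abs_mul, abs_of_pos (div_pos two_pi_pos hL)]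
    calc _ ≤ 1 / 2 * (2 * π / L) := mul_le_mul_of_nonneg_right this (div_pos two_pi_pos hL).le
      _ = π / L := by ring
  · have hrot : Complex.exp (-(z.arg - 2 * π * m / L : ℝ) * Complex.I) * ψ (-m)
        = Complex.exp (-z.arg * Complex.I) := by
      rw [show -(m : ZMod L) = ((-m : ℤ) : ZMod L) by push_cast; rfl, stdAddChar_coe,
        ← Complex.exp_add]
      congr 1
      push_cast
      field_simp
      ring
    have hnorm : (Complex.exp (-z.arg * Complex.I) * z).re = ‖z‖ := by
      nth_rw 2 [← Complex.norm_mul_exp_arg_mul_I z]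
      rw [mul_left_comm, ← Complex.exp_add, neg_mul, neg_add_cancel, Complex.exp_zero, mul_one,
        Complex.ofReal_re]
    rw [← hnorm, ← hrot, mul_assoc, mul_sum, mul_sum, Complex.re_sum]
    refine sum_congr rfl fun k _ => ?_
    rw [← AddChar.map_add_eq_mul, neg_add_eq_sub]

theorem two_mul_pi_div_mul_abs_valMinAbs_le (k : ZMod L) :
    2 * (π / L) * |(k.valMinAbs : ℝ)| ≤ π := by
  have hk : (2 * |k.valMinAbs| : ℝ) ≤ L := by
    obtain ⟨h₁, h₂⟩ := k.valMinAbs_mem_Ioc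
    exact_mod_cast (show 2 * |k.valMinAbs| ≤ L by rcases abs_cases k.valMinAbs with h | h <;> omega)
  rw [show 2 * (π / L) * |(k.valMinAbs : ℝ)| = π * (2 * |(k.valMinAbs : ℝ)|) / L by ring,
    div_le_iff₀ (by exact_mod_cast NeZero.pos L)]
  exact mul_le_mul_of_nonneg_left (by exact_mod_cast hk) pi_pos.le

section Pointwise

variable {M : ℕ} {c k : ZMod L}

theorem cos_le_re_exp_mul_stdAddChar_sub (hM : 2 * M + 1 ≤ L) {φ : ℝ} (hφ : |φ| ≤ π / L)
    (hk : k ∈ consecutive (c - (M : ZMod L)) (2 * M + 1)) :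
    cos ((2 * M + 1) * (π / L)) ≤ (Complex.exp (-φ * Complex.I) * ψ (k - c)).re := by
  rw [re_exp_mul_stdAddChar]
  exact cos_le_cos_two_mul_sub hφ (two_mul_add_one_mul_pi_div_le hM)
    ((mem_consecutive_sub_iff hM c k).1 hk)

theorem re_exp_mul_stdAddChar_sub_le_cos (hM : 2 * M + 1 ≤ L) {φ : ℝ} (hφ : |φ| ≤ π / L)
    (hk : k ∉ consecutive (c - (M : ZMod L)) (2 * M + 1)) :
    (Complex.exp (-φ * Complex.I) * ψ (k - c)).re ≤ cos ((2 * M + 1) * (π / L)) := by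
  rw [mem_consecutive_sub_iff hM c k, not_le] at hk
  rw [re_exp_mul_stdAddChar]
  exact cos_two_mul_sub_le_cos hφ (by omega) (two_mul_pi_div_mul_abs_valMinAbs_le _)

theorem cos_lt_re_stdAddChar_sub (hM : 2 * M + 1 ≤ L)
    (hk : k ∈ consecutive (c - (M : ZMod L)) (2 * M + 1)) :
    cos ((2 * M + 1) * (π / L)) < (ψ (k - c)).re := by
  rw [show (ψ (k - c)).re = (Complex.exp (-(0 : ℝ) * Complex.I) * ψ (k - c)).re by simp,
    re_exp_mul_stdAddChar, sub_zero]
  exact cos_lt_cos_two_mul (div_pos pi_pos (by exact_mod_cast NeZero.pos L))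
    (two_mul_add_one_mul_pi_div_le hM) ((mem_consecutive_sub_iff hM c k).1 hk)

end Pointwise

theorem sum_re_exp_mul_stdAddChar_sub_le (hL : 2 ≤ L) {S : Finset (ZMod L)} {M : ℕ}
    (hS : S.card = 2 * M + 1) (c : ZMod L) {φ : ℝ} (hφ : |φ| ≤ π / L) :
    ∑ k ∈ S, (Complex.exp (-φ * Complex.I) * ψ (k - c)).re
      ≤ sin (π * ↑(2 * M + 1) / L) / sin (π / L) * cos φ := by
  have hM : 2 * M + 1 ≤ L := hS ▸ card_finset_le S
  have hB : ∑ k ∈ consecutive (c - (M : ZMod L)) (2 * M + 1),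
      (Complex.exp (-φ * Complex.I) * ψ (k - c)).re
      = sin (π * ↑(2 * M + 1) / L) / sin (π / L) * cos φ := by
    rw [← Complex.re_sum, ← mul_sum, sum_consecutive_stdAddChar_sub hL hM, mul_comm,
      Complex.re_ofReal_mul, ← Complex.ofReal_neg, Complex.exp_ofReal_mul_I_re, cos_neg]
  rw [← hB]
  exact sum_le_sum_of_card_eq_of_le_of_le (hS.trans (card_consecutive hM _).symm)
    (fun k hk => cos_le_re_exp_mul_stdAddChar_sub hM hφ hk)
    (fun k hk => re_exp_mul_stdAddChar_sub_le_cos hM hφ hk)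

theorem sum_re_stdAddChar_sub_lt (hL : 2 ≤ L) {S : Finset (ZMod L)} {M : ℕ}
    (hS : S.card = 2 * M + 1) (c : ZMod L) (hne : S ≠ consecutive (c - (M : ZMod L)) (2 * M + 1)) :
    ∑ k ∈ S, (ψ (k - c)).re < sin (π * ↑(2 * M + 1) / L) / sin (π / L) := by
  have hM : 2 * M + 1 ≤ L := hS ▸ card_finset_le S
  have hB : ∑ k ∈ consecutive (c - (M : ZMod L)) (2 * M + 1), (ψ (k - c)).re
      = sin (π * ↑(2 * M + 1) / L) / sin (π / L) := by
    rw [← Complex.re_sum, sum_consecutive_stdAddChar_sub hL hM, Complex.ofReal_re]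
  have hφ : |(0 : ℝ)| ≤ π / L := by simp only [abs_zero]; positivity
  rw [← hB]
  refine sum_lt_sum_of_card_eq_of_lt_of_le (hS.trans (card_consecutive hM _).symm) hne
    (fun k hk => cos_lt_re_stdAddChar_sub hM hk) (fun k hk => ?_)
  simpa using re_exp_mul_stdAddChar_sub_le_cos hM hφ hk

theorem norm_sum_stdAddChar_le (hL : 2 ≤ L) {S : Finset (ZMod L)} {M : ℕ}
    (hS : S.card = 2 * M + 1) :
    ‖∑ k ∈ S, ψ k‖ ≤ sin (π * ↑(2 * M + 1) / L) / sin (π / L) := by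
  have hM : 2 * M + 1 ≤ L := hS ▸ card_finset_le S
  obtain ⟨c, φ, hφ, hnorm⟩ := exists_norm_sum_stdAddChar_eq_sum_re S
  calc ‖∑ k ∈ S, ψ k‖ ≤ sin (π * ↑(2 * M + 1) / L) / sin (π / L) * cos φ :=
        hnorm ▸ sum_re_exp_mul_stdAddChar_sub_le hL hS c hφ
    _ ≤ sin (π * ↑(2 * M + 1) / L) / sin (π / L) :=
        mul_le_of_le_one_right (div_nonneg (sin_pi_mul_div_natCast_nonneg hM)
          (sin_pi_div_natCast_pos hL).le) (cos_le_one φ)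

theorem exists_eq_consecutive_of_norm_sum_stdAddChar_eq (hL : 2 ≤ L) {S : Finset (ZMod L)}
    {M : ℕ} (hS : S.card = 2 * M + 1)
    (heq : ‖∑ k ∈ S, ψ k‖ = sin (π * ↑(2 * M + 1) / L) / sin (π / L)) :
    ∃ a, S = consecutive a (2 * M + 1) := by
  have hM : 2 * M + 1 ≤ L := hS ▸ card_finset_le S
  rcases hM.lt_or_eq with hlt | hL'
  · set D := sin (π * ↑(2 * M + 1) / L) / sin (π / L)
    have hD : 0 < D :=
      div_pos (sin_pi_mul_div_natCast_pos (by omega) hlt) (sin_pi_div_natCast_pos hL)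
    obtain ⟨c, φ, hφ, hnorm⟩ := exists_norm_sum_stdAddChar_eq_sum_re S
    have hcos : cos φ = 1 := by
      have := heq ▸ hnorm ▸ sum_re_exp_mul_stdAddChar_sub_le hL hS c hφ
      exact le_antisymm (cos_le_one φ) (le_of_mul_le_mul_left (by linarith) hD)
    have hφ₀ : φ = 0 := by
      have hπ : π / L ≤ π := div_le_self pi_pos.le (by exact_mod_cast NeZero.pos L)
      obtain ⟨h₁, h₂⟩ := abs_le.1 hφ
      exact (cos_eq_one_iff_of_lt_of_lt (by linarith [pi_pos]) (by linarith [pi_pos])).1 hcos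
    subst hφ₀
    refine ⟨c - M, by_contra fun hne => ?_⟩
    have := sum_re_stdAddChar_sub_lt hL hS c hne
    simp only [Complex.ofReal_zero, neg_zero, zero_mul, Complex.exp_zero, one_mul] at hnorm
    linarith
  · have hcard : ∀ T : Finset (ZMod L), T.card = 2 * M + 1 → T = univ := fun T hT =>
      T.eq_univ_of_card (by rw [hT, hL', ZMod.card])
    exact ⟨0, (hcard S hS).trans (hcard _ (card_consecutive hM 0)).symm⟩

end ZMod

open ZMod in
theorem max_abs_sum_roots_general (L N : ℕ) (hL : 2 ≤ L) (hodd : Odd N) :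
    (∀ S : Finset (ZMod L), S.card = N →
      ‖∑ k ∈ S, Complex.exp (2 * Real.pi * Complex.I * (ZMod.val k : ℂ) / (L : ℂ))‖
        ≤ Real.sin (Real.pi * N / L) / Real.sin (Real.pi / L))
    ∧ (∀ S : Finset (ZMod L), S.card = N →
      (‖∑ k ∈ S, Complex.exp (2 * Real.pi * Complex.I * (ZMod.val k : ℂ) / (L : ℂ))‖
          = Real.sin (Real.pi * N / L) / Real.sin (Real.pi / L)
        ↔ ∃ a : ZMod L, S = Finset.image (fun j : Fin N => a + (j : ZMod L)) Finset.univ)) := by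
  have : NeZero L := ⟨by omega⟩
  obtain ⟨M, rfl⟩ := hodd
  simp_rw [← toCircle_apply, ← stdAddChar_apply]
  refine ⟨fun S hS => norm_sum_stdAddChar_le hL hS, fun S hS =>
    ⟨exists_eq_consecutive_of_norm_sum_stdAddChar_eq hL hS, ?_⟩⟩
  rintro ⟨a, rfl⟩
  exact norm_sum_consecutive_stdAddChar hL (hS ▸ card_finset_le _) a

/-- Among all sums of `N` distinct `L`-th roots of unity (`N` odd, `1 ≤ N ≤ L`), the
maximal absolute value, namely `sin(πN/L)/sin(π/L)`, is achieved exactly by sums over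
sets of `N` consecutive roots of unity. -/
theorem max_abs_sum_roots (L N : ℕ) (hL : 2 ≤ L) (hN : 1 ≤ N) (hNL : N ≤ L) (hodd : Odd N) :
    (∀ S : Finset (ZMod L), S.card = N →
      ‖∑ k ∈ S, Complex.exp (2 * Real.pi * Complex.I * (ZMod.val k : ℂ) / (L : ℂ))‖
        ≤ Real.sin (Real.pi * N / L) / Real.sin (Real.pi / L))
    ∧ (∀ S : Finset (ZMod L), S.card = N →
      (‖∑ k ∈ S, Complex.exp (2 * Real.pi * Complex.I * (ZMod.val k : ℂ) / (L : ℂ))‖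
          = Real.sin (Real.pi * N / L) / Real.sin (Real.pi / L)
        ↔ ∃ a : ZMod L, S = Finset.image (fun j : Fin N => a + (j : ZMod L)) Finset.univ)) :=
  max_abs_sum_roots_general L N hL hodd
end

section
/- The function A(ξ) = log cos(πξ/2) + C (for any constant C) is, among even functions A : (−1,1) → ℝ that are C² on (−1,1), the unique solution family of the equation obtained by requiring the Vershik–Kerov–Logan–Shepp family Ω(t,x) = √t · Ω(x/√t) to satisfy the Euler–Lagrange equation A''(g'_x)(g''_{xx})(g'_t)² + 2A'(g'_x) g''_{xt} g'_t − g''_{tt} = 0. -/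
/-!
Put `s = sin (πξ/2)`, `c = cos (πξ/2)`. At the point `x = √t · s` one has `Ω'_x = ξ` and
`√(t - x²) = √t · c`, so the Euler–Lagrange equation for `Ω` becomes the ODE
`A'' c² = π A' s c + (π²/4)(2s² - 1)` on `(-1, 1)`, which is linear of first order in `A'`.
Its first integral is `A' c² + (π/2) s c`; evenness gives `A'(0) = 0`, hence
`A' = -(π/2) tan (πξ/2)` and `A = log cos (πξ/2) + C`. Conversely this `A` satisfies the ODE
identically.
-/

open Real Set Filter Topology

lemma cos_pi_mul_div_two_pos {ξ : ℝ} (hξ : ξ ∈ Ioo (-1 : ℝ) 1) : 0 < cos (π * ξ / 2) :=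
  cos_pos_of_mem_Ioo ⟨by nlinarith [pi_pos, hξ.1], by nlinarith [pi_pos, hξ.2]⟩

lemma abs_sin_pi_mul_div_two_lt_one {ξ : ℝ} (hξ : ξ ∈ Ioo (-1 : ℝ) 1) :
    |sin (π * ξ / 2)| < 1 := by
  rw [← sq_lt_one_iff_abs_lt_one]
  nlinarith [sin_sq_add_cos_sq (π * ξ / 2), cos_pi_mul_div_two_pos hξ]

lemma two_div_pi_mul_arcsin_sqrt_mul_sin {t ξ : ℝ} (ht : 0 < t) (hξ : ξ ∈ Ioo (-1 : ℝ) 1) :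
    2 / π * arcsin (√t * sin (π * ξ / 2) / √t) = ξ := by
  rw [mul_div_cancel_left₀ _ (sqrt_pos.2 ht).ne',
    arcsin_sin (by nlinarith [pi_pos, hξ.1]) (by nlinarith [pi_pos, hξ.2])]
  field_simp

lemma exists_mem_Ioo_eq_sqrt_mul_sin {t x : ℝ} (ht : 0 < t) (hx : |x| < √t) :
    ∃ ξ ∈ Ioo (-1 : ℝ) 1, x = √t * sin (π * ξ / 2) := by
  have hr := sqrt_pos.2 ht
  have hu : |x / √t| < 1 := by rwa [abs_div, abs_of_pos hr, div_lt_one hr]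
  obtain ⟨hu₁, hu₂⟩ := abs_lt.1 hu
  have h₁ := neg_pi_div_two_lt_arcsin.2 hu₁
  have h₂ := arcsin_lt_pi_div_two.2 hu₂
  refine ⟨2 / π * arcsin (x / √t), ⟨?_, ?_⟩, ?_⟩
  · rw [div_mul_eq_mul_div, lt_div_iff₀ pi_pos]
    linarith
  · rw [div_mul_eq_mul_div, div_lt_iff₀ pi_pos]
    linarith
  · rw [show π * (2 / π * arcsin (x / √t)) / 2 = arcsin (x / √t) by field_simp,
      sin_arcsin hu₁.le hu₂.le]
    field_simp

lemma hasDerivAt_pi_mul_div_two (ξ : ℝ) : HasDerivAt (fun y : ℝ ↦ π * y / 2) (π / 2) ξ := by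
  simpa using ((hasDerivAt_id ξ).const_mul π).div_const 2

lemma hasDerivAt_log_cos_pi_mul_div_two {ξ : ℝ} (hξ : cos (π * ξ / 2) ≠ 0) :
    HasDerivAt (fun y ↦ log (cos (π * y / 2))) (-(π / 2) * tan (π * ξ / 2)) ξ := by
  have h : HasDerivAt (fun y ↦ log (cos (π * y / 2)))
      (-sin (π * ξ / 2) * (π / 2) / cos (π * ξ / 2)) ξ :=
    ((hasDerivAt_cos _).comp ξ (hasDerivAt_pi_mul_div_two ξ)).log hξ
  refine h.congr_deriv ?_
  rw [tan_eq_sin_div_cos]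
  ring

lemma hasDerivAt_tan_pi_mul_div_two {ξ : ℝ} (hξ : cos (π * ξ / 2) ≠ 0) :
    HasDerivAt (fun y ↦ tan (π * y / 2)) (π / 2 / cos (π * ξ / 2) ^ 2) ξ := by
  have h : HasDerivAt (fun y ↦ tan (π * y / 2)) (1 / cos (π * ξ / 2) ^ 2 * (π / 2)) ξ :=
    HasDerivAt.comp (h₂ := tan) ξ (hasDerivAt_tan hξ) (hasDerivAt_pi_mul_div_two ξ)
  exact h.congr_deriv (by ring)

lemma deriv_eq_zero_of_even {f : ℝ → ℝ} (hf : (fun y ↦ f (-y)) =ᶠ[𝓝 0] f) : deriv f 0 = 0 := by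
  have h := hf.deriv_eq
  rw [deriv_comp_neg, neg_zero] at h
  linarith

/-- The left-hand side of the Euler–Lagrange equation for `Ω` at `(t, x)`, with `A''(Ω'_x)` and
`A'(Ω'_x)` replaced by `a₂` and `a₁`. -/
noncomputable def vklsEulerLagrange (a₂ a₁ t x : ℝ) : ℝ :=
  a₂ * ((2 / π) / √(t - x ^ 2)) * (√(t - x ^ 2) / (π * t)) ^ 2
    + 2 * a₁ * (-(x / (π * t * √(t - x ^ 2)))) * (√(t - x ^ 2) / (π * t))
    - (2 * x ^ 2 - t) / (2 * π * t ^ 2 * √(t - x ^ 2))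

noncomputable def profileResidual (a₂ a₁ ξ : ℝ) : ℝ :=
  a₂ * cos (π * ξ / 2) ^ 2 - π * a₁ * sin (π * ξ / 2) * cos (π * ξ / 2)
    - π ^ 2 / 4 * (2 * sin (π * ξ / 2) ^ 2 - 1)

lemma vklsEulerLagrange_sqrt_mul_sin (a₂ a₁ : ℝ) {t ξ : ℝ} (ht : 0 < t)
    (hξ : ξ ∈ Ioo (-1 : ℝ) 1) :
    vklsEulerLagrange a₂ a₁ t (√t * sin (π * ξ / 2))
      = 2 / (π ^ 3 * t * √t * cos (π * ξ / 2)) * profileResidual a₂ a₁ ξ := by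
  obtain ⟨r, hr, rfl⟩ : ∃ r > 0, t = r ^ 2 := ⟨√t, sqrt_pos.2 ht, (sq_sqrt ht.le).symm⟩
  have hc := cos_pi_mul_div_two_pos hξ
  unfold vklsEulerLagrange profileResidual
  set s := sin (π * ξ / 2)
  set c := cos (π * ξ / 2)
  have hsq : √(r ^ 2 - (r * s) ^ 2) = r * c := by
    rw [← sqrt_sq (by positivity : 0 ≤ r * c)]
    congr 1
    linear_combination -r ^ 2 * sin_sq_add_cos_sq (π * ξ / 2)
  rw [sqrt_sq hr.le, hsq]
  have := pi_pos
  field_simp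
  ring

lemma forall_vklsEulerLagrange_eq_zero_iff (B₂ B₁ : ℝ → ℝ) :
    (∀ t x : ℝ, 0 < t → |x| < √t →
        vklsEulerLagrange (B₂ (2 / π * arcsin (x / √t))) (B₁ (2 / π * arcsin (x / √t))) t x = 0)
      ↔ ∀ ξ ∈ Ioo (-1 : ℝ) 1, profileResidual (B₂ ξ) (B₁ ξ) ξ = 0 := by
  constructor
  · intro h ξ hξ
    have hEL := h 1 (√1 * sin (π * ξ / 2)) one_pos
      (by simpa using abs_sin_pi_mul_div_two_lt_one hξ)
    rw [two_div_pi_mul_arcsin_sqrt_mul_sin one_pos hξ,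
      vklsEulerLagrange_sqrt_mul_sin _ _ one_pos hξ] at hEL
    refine (mul_eq_zero.1 hEL).resolve_left ?_
    have := cos_pi_mul_div_two_pos hξ
    have := pi_pos
    positivity
  · intro h t x ht hx
    obtain ⟨ξ, hξ, rfl⟩ := exists_mem_Ioo_eq_sqrt_mul_sin ht hx
    rw [two_div_pi_mul_arcsin_sqrt_mul_sin ht hξ, vklsEulerLagrange_sqrt_mul_sin _ _ ht hξ,
      h ξ hξ, mul_zero]

lemma eqOn_neg_tan_of_profileResidual_eq_zero {B B' : ℝ → ℝ}
    (hB : ∀ ξ ∈ Ioo (-1 : ℝ) 1, HasDerivAt B (B' ξ) ξ)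
    (hres : ∀ ξ ∈ Ioo (-1 : ℝ) 1, profileResidual (B' ξ) (B ξ) ξ = 0) (h0 : B 0 = 0) :
    EqOn B (fun ξ ↦ -(π / 2) * tan (π * ξ / 2)) (Ioo (-1) 1) := by
  set H : ℝ → ℝ :=
    fun ξ ↦ B ξ * cos (π * ξ / 2) ^ 2 + π / 2 * (sin (π * ξ / 2) * cos (π * ξ / 2))
  have hH : ∀ ξ ∈ Ioo (-1 : ℝ) 1, HasDerivAt H 0 ξ := by
    intro ξ hξ
    have hcos : HasDerivAt (fun y ↦ cos (π * y / 2)) (-sin (π * ξ / 2) * (π / 2)) ξ :=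
      (hasDerivAt_cos _).comp ξ (hasDerivAt_pi_mul_div_two ξ)
    have hsin : HasDerivAt (fun y ↦ sin (π * y / 2)) (cos (π * ξ / 2) * (π / 2)) ξ :=
      (hasDerivAt_sin _).comp ξ (hasDerivAt_pi_mul_div_two ξ)
    refine (((hB ξ hξ).mul (hcos.pow 2)).add ((hsin.mul hcos).const_mul (π / 2))).congr_deriv ?_
    have h := hres ξ hξ
    unfold profileResidual at h
    simp only [Pi.pow_apply, Nat.cast_ofNat, Nat.reduceSub, pow_one]
    linear_combination h + π ^ 2 / 4 * sin_sq_add_cos_sq (π * ξ / 2)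
  have hHconst : ∀ ξ ∈ Ioo (-1 : ℝ) 1, H ξ = H 0 := fun ξ hξ ↦
    isOpen_Ioo.is_const_of_deriv_eq_zero isPreconnected_Ioo
      (fun y hy ↦ (hH y hy).differentiableAt.differentiableWithinAt)
      (fun y hy ↦ (hH y hy).deriv) hξ (by norm_num)
  intro ξ hξ
  have hc := cos_pi_mul_div_two_pos hξ
  have h := hHconst ξ hξ
  simp only [H, h0, mul_zero, zero_mul, zero_add, zero_div, sin_zero, cos_zero] at h
  have h' : cos (π * ξ / 2) * (2 * B ξ * cos (π * ξ / 2) + π * sin (π * ξ / 2)) = 0 := by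
    linear_combination 2 * h
  have h'' := (mul_eq_zero.1 h').resolve_left hc.ne'
  simp only [tan_eq_sin_div_cos]
  field_simp
  linear_combination h''

lemma exists_eq_log_cos_add_of_hasDerivAt {A : ℝ → ℝ}
    (hA : ∀ ξ ∈ Ioo (-1 : ℝ) 1, HasDerivAt A (-(π / 2) * tan (π * ξ / 2)) ξ) :
    ∃ C : ℝ, ∀ ξ ∈ Ioo (-1 : ℝ) 1, A ξ = log (cos (π * ξ / 2)) + C := by
  have hlog : ∀ ξ ∈ Ioo (-1 : ℝ) 1,
      HasDerivAt (fun y ↦ log (cos (π * y / 2))) (-(π / 2) * tan (π * ξ / 2)) ξ :=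
    fun ξ hξ ↦ hasDerivAt_log_cos_pi_mul_div_two (cos_pi_mul_div_two_pos hξ).ne'
  obtain ⟨C, hC⟩ := isOpen_Ioo.exists_eq_add_of_deriv_eq isPreconnected_Ioo
    (fun ξ hξ ↦ (hA ξ hξ).differentiableAt.differentiableWithinAt)
    (fun ξ hξ ↦ (hlog ξ hξ).differentiableAt.differentiableWithinAt)
    (fun ξ hξ ↦ (hA ξ hξ).deriv.trans (hlog ξ hξ).deriv.symm)
  exact ⟨C, fun ξ hξ ↦ hC hξ⟩

lemma profileResidual_eq_zero_of_eq_log_cos_add {A : ℝ → ℝ} {C : ℝ}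
    (hA : ∀ ξ ∈ Ioo (-1 : ℝ) 1, A ξ = log (cos (π * ξ / 2)) + C) :
    ∀ ξ ∈ Ioo (-1 : ℝ) 1, profileResidual (deriv (deriv A) ξ) (deriv A ξ) ξ = 0 := by
  have hA₁ : EqOn (deriv A) (fun ξ ↦ -(π / 2) * tan (π * ξ / 2)) (Ioo (-1) 1) := by
    intro ξ hξ
    rw [(eventuallyEq_of_mem (isOpen_Ioo.mem_nhds hξ) hA).deriv_eq]
    exact ((hasDerivAt_log_cos_pi_mul_div_two (cos_pi_mul_div_two_pos hξ).ne').add_const C).deriv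
  intro ξ hξ
  have hc := cos_pi_mul_div_two_pos hξ
  have hA₂ : deriv (deriv A) ξ = -(π / 2) * (π / 2 / cos (π * ξ / 2) ^ 2) := by
    rw [(eventuallyEq_of_mem (isOpen_Ioo.mem_nhds hξ) hA₁).deriv_eq]
    exact ((hasDerivAt_tan_pi_mul_div_two hc.ne').const_mul _).deriv
  unfold profileResidual
  rw [hA₂, hA₁ hξ]
  simp only [tan_eq_sin_div_cos]
  field_simp
  ring

/-- An even `C²` function `A` on `(−1,1)` makes the Vershik–Kerov–Logan–Shepp family
`Ω(t,x) = √t·Ω(x/√t)` (with `Ω'_x = (2/π)arcsin(x/√t)`, `Ω'_t = √(t−x²)/(πt)`, and the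
induced second derivatives) a solution of the Euler–Lagrange equation
`A''(g'_x)·g''_{xx}·(g'_t)² + 2A'(g'_x)·g''_{xt}·g'_t − g''_{tt} = 0`
if and only if `A(ξ) = log cos(πξ/2) + C` for some constant `C`. -/
theorem euler_lagrange_determines_A
    (A : ℝ → ℝ) (hA : ContDiffOn ℝ 2 A (Set.Ioo (-1 : ℝ) 1))
    (heven : ∀ ξ ∈ Set.Ioo (-1 : ℝ) 1, A (-ξ) = A ξ) :
    ((∀ t x : ℝ, 0 < t → |x| < Real.sqrt t →
        deriv (deriv A) ((2 / π) * arcsin (x / Real.sqrt t))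
            * ((2 / π) / Real.sqrt (t - x ^ 2)) * (Real.sqrt (t - x ^ 2) / (π * t)) ^ 2
          + 2 * deriv A ((2 / π) * arcsin (x / Real.sqrt t))
            * (-(x / (π * t * Real.sqrt (t - x ^ 2)))) * (Real.sqrt (t - x ^ 2) / (π * t))
          - (2 * x ^ 2 - t) / (2 * π * t ^ 2 * Real.sqrt (t - x ^ 2)) = 0)
      ↔ ∃ C : ℝ, ∀ ξ ∈ Set.Ioo (-1 : ℝ) 1, A ξ = Real.log (Real.cos (π * ξ / 2)) + C) := by
  refine (forall_vklsEulerLagrange_eq_zero_iff (deriv (deriv A)) (deriv A)).trans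
    ⟨fun hres ↦ ?_, fun ⟨C, hC⟩ ↦ profileResidual_eq_zero_of_eq_log_cos_add hC⟩
  have hA₁ : ∀ ξ ∈ Ioo (-1 : ℝ) 1, HasDerivAt A (deriv A ξ) ξ := fun ξ hξ ↦
    ((hA.differentiableOn two_ne_zero).differentiableAt (isOpen_Ioo.mem_nhds hξ)).hasDerivAt
  have hA₂ : ∀ ξ ∈ Ioo (-1 : ℝ) 1, HasDerivAt (deriv A) (deriv (deriv A) ξ) ξ := fun ξ hξ ↦
    (((hA.deriv_of_isOpen isOpen_Ioo (by norm_num)).differentiableOn one_ne_zero).differentiableAt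
      (isOpen_Ioo.mem_nhds hξ)).hasDerivAt
  have hA₁0 : deriv A 0 = 0 :=
    deriv_eq_zero_of_even (eventually_of_mem (isOpen_Ioo.mem_nhds (by norm_num)) heven)
  have htan := eqOn_neg_tan_of_profileResidual_eq_zero hA₂ hres hA₁0
  exact exists_eq_log_cos_add_of_hasDerivAt fun ξ hξ ↦ (hA₁ ξ hξ).congr_deriv (htan hξ)
end

section
/- Let T be the transition matrix of an irreducible topological Markov chain on a finite state space, with spectral radius ρ and strictly positive right eigenvector u (Tu = ρu) and left eigenvector v (v^T T = ρ v^T), normalized so that Σ_s u_s v_s = 1. Then the Markov measure with stationary distribution π_s = u_s v_s and transition probabilities p_{s→s'} = T_{s,s'} u_{s'}/(ρ u_s) is a stationary probability measure whose entropy equals log ρ. -/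
/-!
Writing `p s s' = T s s' u s' / (ρ u s)`, the Perron eigenvector equations say that `p` is
stochastic with stationary vector `π s = u s v s`. Since `T` is 0-1, on every allowed
transition `log p s s' = log u s' - log u s - log ρ`: the logarithm of `p` is a coboundary
minus the constant `log ρ`. A coboundary integrates to zero against a stationary Markov
measure, so the entropy is `log ρ`.
-/

open Finset Matrix

section StationaryMarkov

variable {S : Type*} [Fintype S] {P : Matrix S S ℝ} {π : S → ℝ}

theorem sum_stationary_mul_sum_coboundary_eq_zero (hrow : ∀ s, ∑ s', P s s' = 1)
    (hstat : ∀ s', ∑ s, π s * P s s' = π s') (f : S → ℝ) :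
    ∑ s, π s * ∑ s', P s s' * (f s' - f s) = 0 := by
  have hfwd : ∑ s, π s * ∑ s', P s s' * f s' = ∑ s', π s' * f s' := by
    simp only [mul_sum, ← mul_assoc]
    rw [sum_comm]
    exact sum_congr rfl fun s' _ => by rw [← sum_mul, hstat]
  have hback : ∑ s, π s * ∑ s', P s s' * f s = ∑ s, π s * f s := by
    simp only [← sum_mul, hrow, one_mul]
  simp only [mul_sub, sum_sub_distrib, hfwd, hback, sub_self]

theorem neg_sum_stationary_mul_entropy_eq {f : S → ℝ} {c : ℝ}
    (hrow : ∀ s, ∑ s', P s s' = 1) (hstat : ∀ s', ∑ s, π s * P s s' = π s')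
    (hπ : ∑ s, π s = 1) (hlog : ∀ s s', P s s' ≠ 0 → Real.log (P s s') = f s' - f s - c) :
    -∑ s, π s * ∑ s', P s s' * Real.log (P s s') = c := by
  have hterm : ∀ s s', P s s' * Real.log (P s s') = P s s' * (f s' - f s) - c * P s s' := by
    intro s s'
    by_cases h : P s s' = 0
    · simp [h]
    · rw [hlog s s' h]
      ring
  calc -∑ s, π s * ∑ s', P s s' * Real.log (P s s')
      = c * ∑ s, π s * ∑ s', P s s' - ∑ s, π s * ∑ s', P s s' * (f s' - f s) := by
        simp only [hterm, sum_sub_distrib, ← mul_sum, mul_sub, mul_left_comm (π _) c]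
        ring
    _ = c := by
        rw [sum_stationary_mul_sum_coboundary_eq_zero hrow hstat]
        simp [hrow, hπ]

end StationaryMarkov

section Parry

variable {S : Type*} {T : Matrix S S ℝ} {ρ : ℝ} {u v : S → ℝ}

theorem parry_row_sum [Fintype S] (hρ : ρ ≠ 0) (hu : T *ᵥ u = ρ • u) {s : S} (hus : u s ≠ 0) :
    ∑ s', T s s' * u s' / (ρ * u s) = 1 := by
  rw [← sum_div]
  change (T *ᵥ u) s / _ = 1
  rw [hu, Pi.smul_apply, smul_eq_mul, div_self (mul_ne_zero hρ hus)]

theorem parry_stationary [Fintype S] (hρ : ρ ≠ 0) (hv : v ᵥ* T = ρ • v) (hu0 : ∀ s, u s ≠ 0) (s' : S) :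
    ∑ s, (u s * v s) * (T s s' * u s' / (ρ * u s)) = u s' * v s' := by
  have hterm : ∀ s, (u s * v s) * (T s s' * u s' / (ρ * u s)) = v s * T s s' * (u s' / ρ) := by
    intro s
    field_simp [hu0 s]
  rw [sum_congr rfl fun s _ => hterm s, ← sum_mul]
  change (v ᵥ* T) s' * _ = _
  rw [hv, Pi.smul_apply, smul_eq_mul]
  field_simp

theorem log_parry_transition {s s' : S} (hT : T s s' = 0 ∨ T s s' = 1)
    (hp : T s s' * u s' / (ρ * u s) ≠ 0) :
    Real.log (T s s' * u s' / (ρ * u s)) = Real.log (u s') - Real.log (u s) - Real.log ρ := by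
  obtain ⟨hTu, hρu⟩ := div_ne_zero_iff.mp hp
  have hT1 : T s s' = 1 := hT.resolve_left (left_ne_zero_of_mul hTu)
  rw [hT1, one_mul, Real.log_div (right_ne_zero_of_mul hTu) hρu,
    Real.log_mul (left_ne_zero_of_mul hρu) (right_ne_zero_of_mul hρu)]
  ring

end Parry

theorem parry_measure_entropy_general
    (S : Type*) [Fintype S]
    (T : Matrix S S ℝ) (h01 : ∀ s s', T s s' = 0 ∨ T s s' = 1)
    (ρ : ℝ) (hρ : 0 < ρ) (u v : S → ℝ)
    (hu0 : ∀ s, 0 < u s)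
    (hu : T.mulVec u = ρ • u) (hv : T.vecMul v = ρ • v)
    (hnorm : ∑ s, u s * v s = 1) :
    (∀ s, ∑ s', T s s' * u s' / (ρ * u s) = 1)
    ∧ (∀ s' : S, ∑ s, (u s * v s) * (T s s' * u s' / (ρ * u s)) = u s' * v s')
    ∧ (-∑ s, (u s * v s) *
          ∑ s', (T s s' * u s' / (ρ * u s)) * Real.log (T s s' * u s' / (ρ * u s)))
        = Real.log ρ := by
  have hu_ne : ∀ s, u s ≠ 0 := fun s => (hu0 s).ne'
  have hrow : ∀ s, ∑ s', T s s' * u s' / (ρ * u s) = 1 :=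
    fun s => parry_row_sum hρ.ne' hu (hu_ne s)
  have hstat := parry_stationary hρ.ne' hv hu_ne
  exact ⟨hrow, hstat, neg_sum_stationary_mul_entropy_eq
    (P := of fun s s' => T s s' * u s' / (ρ * u s)) hrow hstat hnorm
    fun s s' => log_parry_transition (h01 s s')⟩

/-- Parry measure: for an irreducible 0-1 transition matrix `T` with spectral radius `ρ`,
positive right eigenvector `u` (`Tu = ρu`) and left eigenvector `v` (`vᵀT = ρvᵀ`)
normalized by `Σ u_s v_s = 1`, the Markov measure with stationary distribution
`π_s = u_s v_s` and transition probabilities `p_{s→s'} = T_{s,s'} u_{s'}/(ρ u_s)` is a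
stationary probability measure whose entropy equals `log ρ`. -/
theorem parry_measure_entropy
    (S : Type*) [Fintype S] [Nonempty S] [DecidableEq S]
    (T : Matrix S S ℝ) (h01 : ∀ s s', T s s' = 0 ∨ T s s' = 1)
    (ρ : ℝ) (hρ : 0 < ρ) (u v : S → ℝ)
    (hu0 : ∀ s, 0 < u s) (hv0 : ∀ s, 0 < v s)
    (hu : T.mulVec u = ρ • u) (hv : T.vecMul v = ρ • v)
    (hnorm : ∑ s, u s * v s = 1) :
    (∀ s, ∑ s', T s s' * u s' / (ρ * u s) = 1)
    ∧ (∀ s' : S, ∑ s, (u s * v s) * (T s s' * u s' / (ρ * u s)) = u s' * v s')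
    ∧ (-∑ s, (u s * v s) *
          ∑ s', (T s s' * u s' / (ρ * u s)) * Real.log (T s s' * u s' / (ρ * u s)))
        = Real.log ρ :=
  parry_measure_entropy_general S T h01 ρ hρ u v hu0 hu hv hnorm
end

section
/- For every n ≥ 1, the sum over all Young diagrams λ of size n of (dim λ)², where dim λ is the number of standard Young tableaux of shape λ, equals n!. -/
open Finset

open scoped Classical in
/-- The number of standard Young tableaux of shape `μ`: bijective, entrywise-monotone
labelings of the cells of `μ` by `{0,…,|μ|−1}` (monotonicity in the product order on
cells together with bijectivity is equivalent to strict increase along rows and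
columns). -/
noncomputable def sytCard (μ : YoungDiagram) : ℕ :=
  Fintype.card {f : μ.cells → Fin μ.card //
    Function.Bijective f ∧ ∀ c₁ c₂ : μ.cells,
      (c₁ : ℕ × ℕ).1 ≤ (c₂ : ℕ × ℕ).1 → (c₁ : ℕ × ℕ).2 ≤ (c₂ : ℕ × ℕ).2 → f c₁ ≤ f c₂}

/-!
Standard Young tableaux of shape `μ` are the natural labellings of the poset of cells of `μ`, so
their number `f μ` satisfies `f μ = ∑ f (μ - b)` over the corners `b` of `μ` (the cell labelled
last is a corner). In Young's lattice, adding a cell and removing a different one commute, and a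
diagram has exactly one more addable cell than removable ones; by induction this gives the
down-up identity `∑ f (ν + c) = (|ν| + 1) f ν` over the addable cells `c` of `ν`. Writing
`(f μ)^2 = ∑ f (μ - b) f μ` and regrouping by `ν = μ - b` then gives
`∑_{|μ| = m + 1} (f μ)^2 = (m + 1) ∑_{|ν| = m} (f ν)^2`.
-/

open Function
open scoped Classical

namespace Finset

variable {α : Type*} [PartialOrder α]

/-- Natural labellings in Stanley's sense; the type is empty unless `n = #s`. -/
def NaturalLabelling (s : Finset α) (n : ℕ) : Type _ :=
  {f : s → Fin n // Bijective f ∧ Monotone f}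

noncomputable def numNaturalLabellings (s : Finset α) : ℕ :=
  Nat.card (s.NaturalLabelling #s)

noncomputable def maximals (s : Finset α) : Finset α :=
  {x ∈ s | Maximal (· ∈ s) x}

@[simp]
lemma mem_maximals {s : Finset α} {x : α} : x ∈ s.maximals ↔ Maximal (· ∈ s) x := by
  simp only [maximals, mem_filter, and_iff_right_iff_imp]
  exact fun h => h.1

namespace NaturalLabelling

variable {s : Finset α} {n : ℕ}

instance : Finite (s.NaturalLabelling n) := Subtype.finite

noncomputable def lastLabelled (f : s.NaturalLabelling (n + 1)) : s :=
  (Equiv.ofBijective f.1 f.2.1).symm (Fin.last n)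

lemma lastLabelled_eq_iff (f : s.NaturalLabelling (n + 1)) {y : s} :
    lastLabelled f = y ↔ f.1 y = Fin.last n :=
  (Equiv.ofBijective f.1 f.2.1).symm_apply_eq.trans eq_comm

lemma apply_ne_last {f : s.NaturalLabelling (n + 1)} {y : s} (hy : (y : α) ≠ lastLabelled f) :
    f.1 y ≠ Fin.last n :=
  fun h => hy (congrArg Subtype.val ((lastLabelled_eq_iff f).2 h)).symm

lemma maximal_lastLabelled (f : s.NaturalLabelling (n + 1)) :
    Maximal (· ∈ s) (lastLabelled f : α) := by
  refine ⟨(lastLabelled f).2, fun y hy hle => ?_⟩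
  have hlast : f.1 ⟨y, hy⟩ = Fin.last n :=
    le_antisymm (Fin.le_last _) (((lastLabelled_eq_iff f).1 rfl).symm.trans_le (f.2.2 hle))
  exact (congrArg Subtype.val ((lastLabelled_eq_iff f).2 hlast)).ge

variable [DecidableEq α] {x : α}

def restrict (f : s.NaturalLabelling (n + 1)) (hf : (lastLabelled f : α) = x) :
    (s.erase x).NaturalLabelling n where
  val y := (f.1 ⟨y, mem_of_mem_erase y.2⟩).castPred
    (apply_ne_last (by rw [hf]; exact ne_of_mem_erase y.2))
  property := by
    refine ⟨⟨fun y z h => ?_, fun i => ?_⟩, fun y z h => Fin.castPred_le_castPred_iff.2 (f.2.2 h)⟩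
    · exact Subtype.ext (congrArg (fun z : s => (z : α)) (f.2.1.1 (Fin.castPred_inj.1 h)))
    · obtain ⟨y, hy⟩ := f.2.1.2 i.castSucc
      have hyx : (y : α) ≠ x := by
        rintro rfl
        exact Fin.castSucc_ne_last i (hy.symm.trans ((lastLabelled_eq_iff f).1 (Subtype.ext hf)))
      exact ⟨⟨y, mem_erase.2 ⟨hyx, y.2⟩⟩, by simp [hy]⟩

noncomputable def extend (hx : Maximal (· ∈ s) x) (g : (s.erase x).NaturalLabelling n) :
    s.NaturalLabelling (n + 1) where
  val y := if h : (y : α) = x then Fin.last n else (g.1 ⟨y, mem_erase.2 ⟨h, y.2⟩⟩).castSucc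
  property := by
    refine ⟨⟨fun y z h => ?_, fun i => ?_⟩, fun y z h => ?_⟩
    · dsimp only at h
      split_ifs at h with hy hz hz
      · exact Subtype.ext (hy.trans hz.symm)
      · exact absurd h.symm (Fin.castSucc_ne_last _)
      · exact absurd h (Fin.castSucc_ne_last _)
      · exact Subtype.ext (congrArg (fun w : s.erase x => (w : α)) (g.2.1.1 (Fin.castSucc_inj.1 h)))
    · obtain ⟨j, rfl⟩ | rfl := Fin.eq_castSucc_or_eq_last i
      · obtain ⟨z, hz⟩ := g.2.1.2 j
        exact ⟨⟨z, mem_of_mem_erase z.2⟩, by simp [ne_of_mem_erase z.2, hz]⟩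
      · exact ⟨⟨x, hx.1⟩, dif_pos rfl⟩
    · dsimp only
      split_ifs with hy hz hz
      · exact le_rfl
      · exact absurd (le_antisymm (hx.2 z.2 (hy ▸ h)) (hy ▸ h)) hz
      · exact Fin.le_last _
      · exact Fin.castSucc_le_castSucc_iff.2 (g.2.2 h)

lemma lastLabelled_extend (hx : Maximal (· ∈ s) x) (g : (s.erase x).NaturalLabelling n) :
    (lastLabelled (extend hx g) : α) = x :=
  congrArg Subtype.val ((lastLabelled_eq_iff _ (y := ⟨x, hx.1⟩)).2 (dif_pos rfl))

noncomputable def equivErase (hx : Maximal (· ∈ s) x) :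
    {f : s.NaturalLabelling (n + 1) // (lastLabelled f : α) = x} ≃
      (s.erase x).NaturalLabelling n where
  toFun f := restrict f.1 f.2
  invFun g := ⟨extend hx g, lastLabelled_extend hx g⟩
  left_inv f := by
    refine Subtype.ext <| Subtype.ext <| funext fun y => ?_
    by_cases hy : (y : α) = x
    · exact (dif_pos hy).trans ((lastLabelled_eq_iff f.1).1 (Subtype.ext (f.2.trans hy.symm))).symm
    · simp [extend, restrict, hy]
  right_inv g := Subtype.ext <| funext fun y => by
    simp [restrict, extend, ne_of_mem_erase y.2]

theorem card_succ_eq_sum :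
    Nat.card (s.NaturalLabelling (n + 1)) =
      ∑ x ∈ s.maximals, Nat.card ((s.erase x).NaturalLabelling n) := by
  let T : s.NaturalLabelling (n + 1) → s.maximals := fun f =>
    ⟨lastLabelled f, mem_maximals.2 (maximal_lastLabelled f)⟩
  calc Nat.card (s.NaturalLabelling (n + 1))
      = Nat.card (Σ x, {f // T f = x}) := Nat.card_congr (Equiv.sigmaFiberEquiv T).symm
    _ = ∑ x : s.maximals, Nat.card ((s.erase x).NaturalLabelling n) := by
      rw [Nat.card_sigma]
      refine Finset.sum_congr rfl fun x _ => Nat.card_congr ?_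
      exact (Equiv.subtypeEquivRight fun f => Subtype.ext_iff).trans
        (equivErase (mem_maximals.1 x.2))
    _ = _ := sum_coe_sort s.maximals fun x => Nat.card ((s.erase x).NaturalLabelling n)

end NaturalLabelling

theorem numNaturalLabellings_empty : numNaturalLabellings (∅ : Finset α) = 1 := by
  have hempty (x : (∅ : Finset α)) : False := notMem_empty _ x.2
  refine Nat.card_eq_one_iff_unique.2 ⟨⟨fun f g => Subtype.ext (funext fun x => (hempty x).elim)⟩,
    ⟨⟨fun x => (hempty x).elim, ⟨fun x => (hempty x).elim, fun i => i.elim0⟩,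
      fun x => (hempty x).elim⟩⟩⟩

theorem numNaturalLabellings_eq_sum_erase [DecidableEq α] {s : Finset α} (hs : s.Nonempty) :
    s.numNaturalLabellings = ∑ x ∈ s.maximals, (s.erase x).numNaturalLabellings := by
  obtain ⟨n, hn⟩ := Nat.exists_eq_add_one.2 hs.card_pos
  rw [numNaturalLabellings, hn, NaturalLabelling.card_succ_eq_sum]
  refine sum_congr rfl fun x hx => ?_
  rw [numNaturalLabellings, card_erase_of_mem (mem_maximals.1 hx).1, hn, Nat.add_sub_cancel]

section LowerSet

variable [DecidableEq α] {s : Finset α} {b c : α}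

lemma isLowerSet_erase (hs : IsLowerSet (s : Set α)) (hb : Maximal (· ∈ s) b) :
    IsLowerSet (s.erase b : Set α) := by
  rw [coe_erase]
  exact hs.erase fun y hy hby => le_antisymm (hb.2 hy hby) hby

lemma isLowerSet_insert (hs : IsLowerSet (s : Set α)) (hc : Minimal (· ∉ s) c) :
    IsLowerSet (↑(insert c s) : Set α) := by
  intro y z hzy hy
  simp only [mem_coe, mem_insert] at hy ⊢
  rcases hy with rfl | hy
  · by_cases hz : z ∈ s
    · exact .inr hz
    · exact .inl (le_antisymm hzy (hc.2 hz hzy))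
  · exact .inr (hs hzy hy)

lemma maximal_insert (hs : IsLowerSet (s : Set α)) (hc : c ∉ s) : Maximal (· ∈ insert c s) c :=
  ⟨mem_insert_self c s, fun y hy hcy => by
    rcases mem_insert.1 hy with rfl | hy
    · exact le_rfl
    · exact absurd (hs hcy hy) hc⟩

lemma minimal_erase (hs : IsLowerSet (s : Set α)) (hb : b ∈ s) : Minimal (· ∉ s.erase b) b :=
  ⟨notMem_erase b s, fun y hy hyb => by
    by_contra hne
    exact hy (mem_erase.2 ⟨fun h => hne (h ▸ le_rfl), hs hyb hb⟩)⟩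

/-- Adding `c` and then removing `b` commutes with removing `b` and then adding `c`. -/
lemma minimal_notMem_and_maximal_insert_iff (hbc : b ≠ c) :
    Minimal (· ∉ s) c ∧ Maximal (· ∈ insert c s) b ↔
      Maximal (· ∈ s) b ∧ Minimal (· ∉ s.erase b) c := by
  constructor
  · rintro ⟨hc, hb⟩
    have hbs : b ∈ s := (mem_insert.1 hb.1).resolve_left hbc
    refine ⟨⟨hbs, fun y hy => hb.2 (mem_insert_of_mem hy)⟩,
      ⟨fun h => hc.1 (mem_of_mem_erase h), fun y hy hyc => ?_⟩⟩
    by_cases hyb : y = b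
    · subst hyb
      exact hb.2 (mem_insert_self c s) hyc
    · exact hc.2 (fun h => hy (mem_erase.2 ⟨hyb, h⟩)) hyc
  · rintro ⟨hb, hc⟩
    have hcs : c ∉ s := fun h => hc.1 (mem_erase.2 ⟨hbc.symm, h⟩)
    refine ⟨⟨hcs, fun y hy => hc.2 fun h => hy (mem_of_mem_erase h)⟩,
      ⟨mem_insert_of_mem hb.1, fun y hy hby => ?_⟩⟩
    rcases mem_insert.1 hy with rfl | hy
    · exact hc.2 (notMem_erase b s) hby
    · exact hb.2 hy hby

theorem numNaturalLabellings_insert (hs : IsLowerSet (s : Set α)) (hc : c ∉ s) :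
    (insert c s).numNaturalLabellings = s.numNaturalLabellings +
      ∑ b ∈ (insert c s).maximals.erase c, (insert c (s.erase b)).numNaturalLabellings := by
  rw [numNaturalLabellings_eq_sum_erase (insert_nonempty c s),
    ← add_sum_erase _ _ (mem_maximals.2 (maximal_insert hs hc)), erase_insert hc]
  exact congrArg _ (sum_congr rfl fun b hb => by rw [erase_insert_of_ne (ne_of_mem_erase hb).symm])

end LowerSet

end Finset

/-- Every minimal cell outside `s` is the origin or a neighbour of a cell of `s`. -/
noncomputable def addableCells (s : Finset (ℕ × ℕ)) : Finset (ℕ × ℕ) :=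
  {c ∈ insert (0, 0) (s.image (fun p => (p.1 + 1, p.2)) ∪ s.image (fun p => (p.1, p.2 + 1))) |
    Minimal (· ∉ s) c}

lemma mem_addableCells {s : Finset (ℕ × ℕ)} {c : ℕ × ℕ} :
    c ∈ addableCells s ↔ Minimal (· ∉ s) c := by
  refine ⟨fun h => (mem_filter.1 h).2, fun hc => mem_filter.2 ⟨?_, hc⟩⟩
  have below (p : ℕ × ℕ) (hle : p ≤ c) (hne : p ≠ c) : p ∈ s :=
    by_contra fun h => hne (le_antisymm hle (hc.2 h hle))
  obtain ⟨_ | i, _ | j⟩ := c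
  · exact mem_insert_self _ _
  · refine mem_insert_of_mem (mem_union_right _ (mem_image.2 ⟨(0, j), below _ ?_ ?_, rfl⟩)) <;>
      simp [Prod.mk_le_mk]
  · refine mem_insert_of_mem (mem_union_left _ (mem_image.2 ⟨(i, 0), below _ ?_ ?_, rfl⟩)) <;>
      simp [Prod.mk_le_mk]
  · refine mem_insert_of_mem (mem_union_left _ (mem_image.2 ⟨(i, j + 1), below _ ?_ ?_, rfl⟩)) <;>
      simp [Prod.mk_le_mk]

namespace YoungDiagram

variable (μ : YoungDiagram) {i j : ℕ}

lemma maximal_mem_cells_iff :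
    Maximal (· ∈ μ.cells) (i, j) ↔ j + 1 = μ.rowLen i ∧ μ.rowLen (i + 1) < μ.rowLen i := by
  simp only [maximal_iff, mem_cells, mem_iff_lt_rowLen, Prod.forall, Prod.mk_le_mk, Prod.mk.injEq]
  constructor
  · rintro ⟨hj, hmax⟩
    have hright : ¬ j + 1 < μ.rowLen i := fun h => by
      simpa using hmax i (j + 1) h ⟨le_rfl, by omega⟩
    have hdown : ¬ j < μ.rowLen (i + 1) := fun h => by
      simpa using hmax (i + 1) j h ⟨by omega, le_rfl⟩
    omega
  · rintro ⟨hj, hlt⟩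
    refine ⟨by omega, fun a b hb ⟨hia, hjb⟩ => ?_⟩
    obtain rfl | hia := hia.eq_or_lt
    · omega
    · have := μ.rowLen_anti (i + 1) a hia
      omega

lemma minimal_notMem_cells_iff :
    Minimal (· ∉ μ.cells) (i, j) ↔ j = μ.rowLen i ∧ (i = 0 ∨ μ.rowLen i < μ.rowLen (i - 1)) := by
  simp only [minimal_iff, mem_cells, mem_iff_lt_rowLen, not_lt, Prod.forall, Prod.mk_le_mk,
    Prod.mk.injEq]
  constructor
  · rintro ⟨hj, hmin⟩
    refine ⟨by_contra fun hne => ?_, by_contra fun hi => ?_⟩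
    · have := hmin i (j - 1) (by omega) ⟨le_rfl, by omega⟩
      omega
    · have := hmin (i - 1) j (by omega) ⟨by omega, le_rfl⟩
      omega
  · rintro ⟨rfl, hi⟩
    refine ⟨le_rfl, fun a b hab ⟨hai, hbj⟩ => ?_⟩
    obtain rfl | hai := hai.eq_or_lt
    · omega
    · have := μ.rowLen_anti a (i - 1) (by omega)
      omega

lemma addableCells_cells :
    addableCells μ.cells =
      insert (0, μ.rowLen 0) (μ.cells.maximals.image fun b => (b.1 + 1, μ.rowLen (b.1 + 1))) := by
  ext ⟨i, j⟩
  simp only [mem_addableCells, minimal_notMem_cells_iff, mem_insert, mem_image, mem_maximals,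
    Prod.exists, maximal_mem_cells_iff, Prod.mk.injEq]
  constructor
  · rintro ⟨rfl, hi⟩
    rcases i with _ | k
    · exact .inl ⟨rfl, rfl⟩
    · simp only [Nat.add_sub_cancel, Nat.add_one_ne_zero, false_or] at hi
      exact .inr ⟨k, μ.rowLen k - 1, ⟨by omega, hi⟩, rfl, rfl⟩
  · rintro (⟨rfl, rfl⟩ | ⟨k, l, ⟨-, hk⟩, rfl, rfl⟩)
    · exact ⟨rfl, .inl rfl⟩
    · exact ⟨rfl, .inr hk⟩

lemma card_addableCells : #(addableCells μ.cells) = #μ.cells.maximals + 1 := by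
  rw [addableCells_cells, card_insert_of_notMem (by simp), card_image_of_injOn]
  rintro ⟨i, j⟩ hij ⟨k, l⟩ hkl h
  simp only [mem_coe, mem_maximals, maximal_mem_cells_iff] at hij hkl
  simp only [Prod.mk.injEq, Nat.add_right_cancel_iff] at h
  obtain ⟨rfl, -⟩ := h
  exact Prod.ext rfl (by omega)

end YoungDiagram

lemma sum_addableCells_sum_maximals_erase_comm {M : Type*} [AddCommMonoid M]
    (s : Finset (ℕ × ℕ)) (f : ℕ × ℕ → ℕ × ℕ → M) :
    ∑ c ∈ addableCells s, ∑ b ∈ (insert c s).maximals.erase c, f c b =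
      ∑ b ∈ s.maximals, ∑ c ∈ (addableCells (s.erase b)).erase b, f c b := by
  refine sum_comm' fun c b => ?_
  rcases eq_or_ne b c with rfl | hbc
  · simp
  · have := minimal_notMem_and_maximal_insert_iff (s := s) hbc
    simp only [mem_erase, mem_maximals, mem_addableCells] at this ⊢
    tauto

theorem sum_numNaturalLabellings_insert_addableCells {s : Finset (ℕ × ℕ)}
    (hs : IsLowerSet (s : Set (ℕ × ℕ))) :
    ∑ c ∈ addableCells s, (insert c s).numNaturalLabellings =
      (#s + 1) * s.numNaturalLabellings := by
  induction s using Finset.strongInduction with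
  | H s ih =>
  have contract (b : ℕ × ℕ) (hb : b ∈ s.maximals) :
      s.numNaturalLabellings + ∑ c ∈ (addableCells (s.erase b)).erase b,
        (insert c (s.erase b)).numNaturalLabellings = #s * (s.erase b).numNaturalLabellings := by
    have hbs : b ∈ s := (mem_maximals.1 hb).1
    have hb' : b ∈ addableCells (s.erase b) := mem_addableCells.2 (minimal_erase hs hbs)
    rw [← card_erase_add_one hbs,
      ← ih _ (erase_ssubset hbs) (isLowerSet_erase hs (mem_maximals.1 hb)),
      ← add_sum_erase _ _ hb', insert_erase hbs]
  have hcard : #(addableCells s) = #s.maximals + 1 := YoungDiagram.card_addableCells ⟨s, hs⟩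
  have hrec : #s * ∑ b ∈ s.maximals, (s.erase b).numNaturalLabellings =
      #s * s.numNaturalLabellings := by
    rcases s.eq_empty_or_nonempty with rfl | hne
    · simp
    · rw [← numNaturalLabellings_eq_sum_erase hne]
  rw [sum_congr rfl fun c hc => numNaturalLabellings_insert hs (mem_addableCells.1 hc).1,
    sum_add_distrib, sum_const, smul_eq_mul, hcard, sum_addableCells_sum_maximals_erase_comm]
  calc (#s.maximals + 1) * s.numNaturalLabellings + _
      = s.numNaturalLabellings + ∑ b ∈ s.maximals, (s.numNaturalLabellings +
          ∑ c ∈ (addableCells (s.erase b)).erase b,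
            (insert c (s.erase b)).numNaturalLabellings) := by
        rw [sum_add_distrib, sum_const, smul_eq_mul]
        ring
    _ = (#s + 1) * s.numNaturalLabellings := by
        rw [sum_congr rfl contract, ← mul_sum, hrec]
        ring

lemma subset_range_card_product_of_isLowerSet {s : Finset (ℕ × ℕ)}
    (hs : IsLowerSet (s : Set (ℕ × ℕ))) :
    s ⊆ range #s ×ˢ range #s := by
  rintro ⟨i, j⟩ h
  have hbox : range (i + 1) ×ˢ range (j + 1) ⊆ s := fun p hp => by
    simp only [mem_product, mem_range] at hp
    exact hs (Prod.mk_le_mk.2 ⟨by omega, by omega⟩) h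
  have := card_le_card hbox
  rw [card_product, card_range, card_range] at this
  simp only [mem_product, mem_range]
  constructor <;> nlinarith

noncomputable def lowerSetsOfCard (n : ℕ) : Finset (Finset (ℕ × ℕ)) :=
  {s ∈ (range n ×ˢ range n).powerset | IsLowerSet (s : Set (ℕ × ℕ)) ∧ #s = n}

lemma mem_lowerSetsOfCard {n : ℕ} {s : Finset (ℕ × ℕ)} :
    s ∈ lowerSetsOfCard n ↔ IsLowerSet (s : Set (ℕ × ℕ)) ∧ #s = n := by
  simp only [lowerSetsOfCard, mem_filter, mem_powerset, and_iff_right_iff_imp]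
  rintro ⟨hs, rfl⟩
  exact subset_range_card_product_of_isLowerSet hs

theorem sum_sq_lowerSetsOfCard_succ (m : ℕ) :
    ∑ t ∈ lowerSetsOfCard (m + 1), t.numNaturalLabellings ^ 2 =
      (m + 1) * ∑ s ∈ lowerSetsOfCard m, s.numNaturalLabellings ^ 2 := by
  calc ∑ t ∈ lowerSetsOfCard (m + 1), t.numNaturalLabellings ^ 2
      = ∑ t ∈ lowerSetsOfCard (m + 1), ∑ b ∈ t.maximals,
          (t.erase b).numNaturalLabellings * t.numNaturalLabellings := by
        refine sum_congr rfl fun t ht => ?_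
        have hne : t.Nonempty := card_pos.1 (by rw [(mem_lowerSetsOfCard.1 ht).2]; omega)
        rw [sq, ← sum_mul, ← numNaturalLabellings_eq_sum_erase hne]
    _ = ∑ s ∈ lowerSetsOfCard m, ∑ c ∈ addableCells s,
          s.numNaturalLabellings * (insert c s).numNaturalLabellings := by
        rw [sum_sigma', sum_sigma']
        refine sum_nbij' (fun p => ⟨p.1.erase p.2, p.2⟩) (fun p => ⟨insert p.2 p.1, p.2⟩)
          ?_ ?_ ?_ ?_ ?_
        · rintro ⟨t, b⟩ h
          simp only [mem_sigma, mem_lowerSetsOfCard, mem_maximals] at h ⊢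
          obtain ⟨⟨ht, hcard⟩, hb⟩ := h
          refine ⟨⟨isLowerSet_erase ht hb, ?_⟩, mem_addableCells.2 (minimal_erase ht hb.1)⟩
          rw [card_erase_of_mem hb.1, hcard, Nat.add_sub_cancel]
        · rintro ⟨s, c⟩ h
          simp only [mem_sigma, mem_lowerSetsOfCard, mem_addableCells] at h ⊢
          obtain ⟨⟨hs, hcard⟩, hc⟩ := h
          refine ⟨⟨isLowerSet_insert hs hc, ?_⟩, mem_maximals.2 (maximal_insert hs hc.1)⟩
          rw [card_insert_of_notMem hc.1, hcard]
        · rintro ⟨t, b⟩ h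
          simp only [mem_sigma, mem_maximals] at h
          simp [insert_erase h.2.1]
        · rintro ⟨s, c⟩ h
          simp only [mem_sigma, mem_addableCells] at h
          simp [erase_insert h.2.1]
        · rintro ⟨t, b⟩ h
          simp only [mem_sigma, mem_maximals] at h
          simp [insert_erase h.2.1]
    _ = ∑ s ∈ lowerSetsOfCard m, (m + 1) * s.numNaturalLabellings ^ 2 := by
        refine sum_congr rfl fun s hmem => ?_
        obtain ⟨hs, rfl⟩ := mem_lowerSetsOfCard.1 hmem
        rw [← mul_sum, sum_numNaturalLabellings_insert_addableCells hs]
        ring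
    _ = _ := (mul_sum _ _ _).symm

theorem sum_sq_lowerSetsOfCard (n : ℕ) :
    ∑ s ∈ lowerSetsOfCard n, s.numNaturalLabellings ^ 2 = n.factorial := by
  induction n with
  | zero =>
    have : lowerSetsOfCard 0 = {∅} := by
      ext s
      rw [mem_lowerSetsOfCard, mem_singleton, card_eq_zero]
      refine ⟨And.right, ?_⟩
      rintro rfl
      simp [isLowerSet_empty]
    simp [this, numNaturalLabellings_empty]
  | succ m ih => rw [sum_sq_lowerSetsOfCard_succ, ih, Nat.factorial_succ]

lemma sytCard_eq_numNaturalLabellings (μ : YoungDiagram) :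
    sytCard μ = μ.cells.numNaturalLabellings := by
  rw [sytCard, ← Nat.card_eq_fintype_card]
  exact Nat.card_congr (Equiv.subtypeEquivRight fun f => and_congr_right' 
    ⟨fun h a b hab => h a b hab.1 hab.2, fun h a b h₁ h₂ => h (Prod.mk_le_mk.2 ⟨h₁, h₂⟩)⟩)

theorem sum_sq_dim_eq_factorial_general
    (n : ℕ) (F : Finset YoungDiagram) (hF : ∀ μ, μ ∈ F ↔ μ.card = n) :
    ∑ μ ∈ F, (sytCard μ) ^ 2 = Nat.factorial n := by
  have hcells : F.image YoungDiagram.cells = lowerSetsOfCard n := by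
    ext s
    simp only [mem_image, mem_lowerSetsOfCard, hF]
    constructor
    · rintro ⟨μ, rfl, rfl⟩
      exact ⟨μ.isLowerSet, rfl⟩
    · rintro ⟨hs, rfl⟩
      exact ⟨⟨s, hs⟩, rfl, rfl⟩
  rw [← sum_sq_lowerSetsOfCard n, ← hcells, sum_image fun μ _ ν _ => YoungDiagram.ext]
  simp only [sytCard_eq_numNaturalLabellings]

/-- For every `n ≥ 1`, the sum over all Young diagrams of size `n` of the square of the
number of standard Young tableaux of that shape equals `n!`. -/
theorem sum_sq_dim_eq_factorial
    (n : ℕ) (hn : 1 ≤ n) (F : Finset YoungDiagram) (hF : ∀ μ, μ ∈ F ↔ μ.card = n) :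
    ∑ μ ∈ F, (sytCard μ) ^ 2 = Nat.factorial n :=
  sum_sq_dim_eq_factorial_general n F hF
end
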